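/- Let b₂,…,b_{2n} : S → ℂ be continuous functions on a compact set S such that the 1-form β = dw + (Σ_{j=2}^{2n} b_j(p) ζ_j) dz + (higher order in ζ) restricted to the zero section ζ = 0 satisfies β = dw there, and suppose β ∧ (dβ)ⁿ ≠ 0 at every point (p,0). If at some point p₀ ∈ S all b_j(p₀) = 0 and the remaining terms of dβ at (p₀,0) contain no dz component, then β ∧ (dβ)ⁿ vanishes at (p₀,0) — a contradiction; hence b₂,…,b_{2n} have no common zero on S. -/

import Mathlib

/-! At a common zero of the `b_j`, both `β = dw` and `dβ` are built from covectors without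
`dz`-component, i.e. from the `2n`-dimensional hyperplane `U = ker dz`. So `β ∧ (dβ)ⁿ` lies in
the image of `⋀^(2n+1) U = 0`, contradicting the contact condition. -/

open ExteriorAlgebra Module

section
variable {K V : Type*} [Field K] [AddCommGroup V] [Module K V]

theorem exteriorPower_eq_bot_of_finrank_lt [FiniteDimensional K V] {k : ℕ}
    (hk : finrank K V < k) : ⋀[K]^k V = ⊥ := by
  rw [← Submodule.finrank_eq_zero, exteriorPower.finrank_eq, Nat.choose_eq_zero_of_lt hk]

theorem map_ι_pow_eq_bot_of_finrank_lt (U : Submodule K V) [FiniteDimensional K U] {k : ℕ}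
    (hk : finrank K U < k) : U.map (ι K) ^ k = ⊥ := by
  have hU : U.map (ι K) = (LinearMap.range (ι K)).map (map U.subtype).toLinearMap := by
    rw [← LinearMap.range_comp, map_comp_ι, LinearMap.range_comp, U.range_subtype]
  rw [hU, ← Submodule.map_pow, ← exteriorPower, exteriorPower_eq_bot_of_finrank_lt hk,
    Submodule.map_bot]

end

theorem finrank_ker_proj_add_one {K : Type*} [Field K] {m : ℕ} (i : Fin m) :
    finrank K (LinearMap.ker (LinearMap.proj i : (Fin m → K) →ₗ[K] K)) + 1 = m := by
  rw [Dual.finrank_ker_add_one_of_ne_zero, finrank_fin_fun]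
  intro h
  simpa using LinearMap.congr_fun h (Pi.single i 1)

theorem Submodule.mul_pow_mem_pow_two_mul_add_one {R A : Type*} [CommSemiring R] [Semiring A]
    [Algebra R A] {P : Submodule R A} {x y : A} (hx : x ∈ P) (hy : y ∈ P ^ 2) (n : ℕ) :
    x * y ^ n ∈ P ^ (2 * n + 1) := by
  rw [pow_succ', pow_mul]
  exact Submodule.mul_mem_mul hx (Submodule.pow_mem_pow _ hy n)

/- Covectors at `(p, 0)` are vectors in `Fin (2n+1) → ℂ`: coordinate `0` is the
`dz`-coefficient, coordinate `1` the `dw`-coefficient. -/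
/-- Work at points `(p,0)` of the zero section of `S × ℂ^{2n}`, and
represent covectors on the `(2n+1)`-dimensional tangent space by vectors in
`W = Fin (2n+1) → ℂ`, where the coordinate `0` is the `dz`-coefficient and coordinate `1`
the `dw`-coefficient.  Covectors with no `dz`-component form the hyperplane
`U = ker(proj 0)` (of dimension `2n`).  Suppose along `ζ = 0` the 1-form `β` equals `dw`
(i.e. `β p = ι(single 1 1)`), the contact condition `β ∧ (dβ)^n ≠ 0` holds, and at any
common zero `p` of the coefficient functions `b_j` of the `dz`-part, the 2-form `dβ` at
`(p,0)` has no `dz`-component, i.e. lies in the degree-two part `(ι U)·(ι U)` of the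
exterior algebra of `U`.  Then (since `β ∧ (dβ)^n` would be a `(2n+1)`-form built from the
`2n`-dimensional space `U`, hence zero, contradicting the contact condition) the functions
`b_j` have no common zero on `S`. -/
theorem no_common_zero_of_contact_condition
    (n : ℕ) (hn : 0 < n) (S : Set ℂ)
    (b : Fin (2 * n - 1) → ℂ → ℂ)
    (β dβ : ℂ → ExteriorAlgebra ℂ (Fin (2 * n + 1) → ℂ))
    (hβ : ∀ p ∈ S, β p =
      ExteriorAlgebra.ι ℂ (Pi.single (⟨1, by omega⟩ : Fin (2 * n + 1)) 1))
    (hdz : ∀ p ∈ S, (∀ j, b j p = 0) →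
      dβ p ∈ (Submodule.map (ExteriorAlgebra.ι ℂ)
          (LinearMap.ker
            (LinearMap.proj (⟨0, by omega⟩ : Fin (2 * n + 1)) :
              (Fin (2 * n + 1) → ℂ) →ₗ[ℂ] ℂ))) ^ 2)
    (hcontact : ∀ p ∈ S, β p * (dβ p) ^ n ≠ 0) :
    ∀ p ∈ S, ∃ j, b j p ≠ 0 := by
  intro p hp
  by_contra! hb
  set U := LinearMap.ker (LinearMap.proj (⟨0, by omega⟩ : Fin (2 * n + 1)) :
    (Fin (2 * n + 1) → ℂ) →ₗ[ℂ] ℂ)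
  have hβU : β p ∈ U.map (ι ℂ) := by
    rw [hβ p hp]
    exact Submodule.mem_map_of_mem (by simp [U, Fin.ext_iff])
  have hU : finrank ℂ U < 2 * n + 1 := by
    have : finrank ℂ U + 1 = 2 * n + 1 := finrank_ker_proj_add_one _
    omega
  have hmem := Submodule.mul_pow_mem_pow_two_mul_add_one hβU (hdz p hp hb) n
  rw [map_ι_pow_eq_bot_of_finrank_lt U hU, Submodule.mem_bot] at hmem
  exact hcontact p hp hmem
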